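/- arXiv:2603.28011 — 2 statements merged into one kernel-verified Lean document; each statement's English description precedes it below -/
import Mathlib

section
/- With notation as in the asymmetric contraction matrix setting, for each fixed x the matrix S(x) = M(x)Df(x) + Df(x)ᵀM(x) + (D_{f(x)}M)(x) + 2cM(x) is negative semidefinite if and only if μ₂(G(x)) ≤ 0, where G(x) = Θ(x)ᵀ[(D_{f(x)}Θ)(x) + Θ(x)(Df(x) + cI)] and M = ΘᵀΘ. -/
/-!
By the product rule, `D_{f} M = (D_{f} Θ)ᵀ Θ + Θᵀ D_{f} Θ`, and substituting this into `S` gives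
`S = G + Gᵀ`. Hence `vᵀ S v = 2 vᵀ G v = 2 vᵀ ((G + Gᵀ)/2) v`, and by the spectral theorem the
quadratic form of the symmetric matrix `(G + Gᵀ)/2` is nonpositive exactly when all its
eigenvalues are, i.e. when `μ₂(G) ≤ 0`.
-/

open Matrix

lemma symPart_isHermitian {n : ℕ} (A : Matrix (Fin n) (Fin n) ℝ) :
    ((1/2 : ℝ) • (A + Aᵀ)).IsHermitian := by
  ext i j
  simp [Matrix.conjTranspose_apply, Matrix.transpose_apply, add_comm]
  ring

/-- The ℓ₂-logarithmic norm `μ₂(A) = λ_max((A + Aᵀ)/2)`: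
the largest eigenvalue of the symmetric part of `A`. -/
noncomputable def mu2 {n : ℕ} (A : Matrix (Fin n) (Fin n) ℝ) : ℝ :=
  ⨆ i, (symPart_isHermitian A).eigenvalues i

open scoped ComplexOrder

namespace Matrix

lemma IsHermitian.posSemidef_neg_iff_eigenvalues_nonpos {n 𝕜 : Type*} [Fintype n]
    [DecidableEq n] [RCLike 𝕜] {A : Matrix n n 𝕜} (hA : A.IsHermitian) :
    (-A).PosSemidef ↔ hA.eigenvalues ≤ 0 := by
  conv_lhs => rw [hA.spectral_theorem, ← map_neg]
  simp [Unitary.isUnit_coe.posSemidef_star_right_conjugate_iff, Pi.le_def]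

lemma IsHermitian.dotProduct_mulVec_nonpos_iff {n : Type*} [Fintype n] [DecidableEq n]
    {A : Matrix n n ℝ} (hA : A.IsHermitian) :
    (∀ v, v ⬝ᵥ A *ᵥ v ≤ 0) ↔ ∀ i, hA.eigenvalues i ≤ 0 := by
  calc (∀ v, v ⬝ᵥ A *ᵥ v ≤ 0) ↔ (-A).PosSemidef := by
        simp [posSemidef_iff_dotProduct_mulVec, isHermitian_iff_isSymm.mp hA, neg_mulVec]
    _ ↔ ∀ i, hA.eigenvalues i ≤ 0 := hA.posSemidef_neg_iff_eigenvalues_nonpos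

lemma dotProduct_add_transpose_mulVec {n R : Type*} [Fintype n] [CommSemiring R]
    (A : Matrix n n R) (v : n → R) : v ⬝ᵥ (A + Aᵀ) *ᵥ v = 2 * (v ⬝ᵥ A *ᵥ v) := by
  rw [add_mulVec, dotProduct_add, dotProduct_transpose_mulVec, two_mul]

lemma transpose_mul_self_lmi_eq_add_transpose {n R : Type*} [Fintype n] [DecidableEq n]
    [CommRing R] (T D T' : Matrix n n R) (c : R) :
    Tᵀ * T * D + Dᵀ * (Tᵀ * T) + (T'ᵀ * T + Tᵀ * T') + (2 * c) • (Tᵀ * T) =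
      Tᵀ * (T' + T * (D + c • 1)) + (Tᵀ * (T' + T * (D + c • 1)))ᵀ := by
  simp only [transpose_add, transpose_mul, transpose_smul, Matrix.mul_add,
    Matrix.mul_smul, Matrix.mul_one, transpose_transpose, Matrix.mul_assoc,
    two_mul, add_smul]
  abel

end Matrix

lemma mu2_nonpos_iff {n : ℕ} (A : Matrix (Fin n) (Fin n) ℝ) :
    mu2 A ≤ 0 ↔ ∀ v, v ⬝ᵥ A *ᵥ v ≤ 0 := by
  have hsup : mu2 A ≤ 0 ↔ ∀ i, (symPart_isHermitian A).eigenvalues i ≤ 0 :=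
    ⟨fun h i => (le_ciSup (Set.finite_range _).bddAbove i).trans h, Real.iSup_nonpos⟩
  rw [hsup, ← (symPart_isHermitian A).dotProduct_mulVec_nonpos_iff]
  simp only [smul_mulVec, dotProduct_smul, dotProduct_add_transpose_mulVec, smul_eq_mul, one_div,
    inv_mul_cancel_left₀ (two_ne_zero' ℝ)]

section MatrixDirDeriv

variable {𝕜 E : Type*} [NontriviallyNormedField 𝕜] [NormedAddCommGroup E] [NormedSpace 𝕜 E]
  {l m p : Type*} [Fintype m]

noncomputable def matrixDirDeriv (A : E → Matrix l m 𝕜) (x v : E) : Matrix l m 𝕜 :=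
  Matrix.of fun i j => fderiv 𝕜 (fun y => A y i j) x v

omit [Fintype m] in
lemma matrixDirDeriv_transpose (A : E → Matrix l m 𝕜) (x v : E) :
    matrixDirDeriv (fun y => (A y)ᵀ) x v = (matrixDirDeriv A x v)ᵀ :=
  rfl

lemma matrixDirDeriv_mul {A : E → Matrix l m 𝕜} {B : E → Matrix m p 𝕜} {x : E}
    (hA : ∀ i j, DifferentiableAt 𝕜 (fun y => A y i j) x)
    (hB : ∀ i j, DifferentiableAt 𝕜 (fun y => B y i j) x) (v : E) :
    matrixDirDeriv (fun y => A y * B y) x v =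
      matrixDirDeriv A x v * B x + A x * matrixDirDeriv B x v := by
  ext i j
  have hentry : HasFDerivAt (fun y => ∑ k, A y i k * B y k j)
      (∑ k, (A x i k • fderiv 𝕜 (fun y => B y k j) x + B x k j • fderiv 𝕜 (fun y => A y i k) x))
      x :=
    HasFDerivAt.fun_sum fun k _ => (hA i k).hasFDerivAt.mul (hB k j).hasFDerivAt
  simp only [matrixDirDeriv, mul_apply, of_apply, Matrix.add_apply, hentry.fderiv,
    _root_.sum_apply, _root_.add_apply, _root_.smul_apply, smul_eq_mul, ← Finset.sum_add_distrib]
  exact Finset.sum_congr rfl fun k _ => by ring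

end MatrixDirDeriv

theorem negSemidef_S_iff_mu2_G_nonpos_general {n : ℕ}
    (Θ : (Fin n → ℝ) → Matrix (Fin n) (Fin n) ℝ)
    (f : (Fin n → ℝ) → (Fin n → ℝ)) (c : ℝ)
    (hΘ : ∀ i j, ContDiff ℝ 1 (fun x => Θ x i j))
    (Df : (Fin n → ℝ) → Matrix (Fin n) (Fin n) ℝ)
    (DΘ : (Fin n → ℝ) → Matrix (Fin n) (Fin n) ℝ)
    (hDΘ : ∀ x i j, DΘ x i j = fderiv ℝ (fun y => Θ y i j) x (f x))
    (M : (Fin n → ℝ) → Matrix (Fin n) (Fin n) ℝ)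
    (hM : ∀ x, M x = (Θ x)ᵀ * Θ x)
    (DM : (Fin n → ℝ) → Matrix (Fin n) (Fin n) ℝ)
    (hDM : ∀ x i j, DM x i j = fderiv ℝ (fun y => M y i j) x (f x))
    (G : (Fin n → ℝ) → Matrix (Fin n) (Fin n) ℝ)
    (hG : ∀ x, G x = (Θ x)ᵀ * (DΘ x + Θ x * (Df x + c • (1 : Matrix (Fin n) (Fin n) ℝ))))
    (S : (Fin n → ℝ) → Matrix (Fin n) (Fin n) ℝ)
    (hS : ∀ x, S x = M x * Df x + (Df x)ᵀ * M x + DM x + (2 * c) • M x)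
    (x : Fin n → ℝ) :
    (∀ v : Fin n → ℝ, v ⬝ᵥ (S x).mulVec v ≤ 0) ↔ mu2 (G x) ≤ 0 := by
  have hΘx : ∀ i j, DifferentiableAt ℝ (fun y => Θ y i j) x :=
    fun i j => (hΘ i j).differentiable one_ne_zero x
  have hDΘx : DΘ x = matrixDirDeriv Θ x (f x) := ext (hDΘ x)
  have hDMx : DM x = matrixDirDeriv M x (f x) := ext (hDM x)
  have hSG : S x = G x + (G x)ᵀ := by
    rw [hS, hG, hDMx, show M = fun y => (Θ y)ᵀ * Θ y from funext hM,
      matrixDirDeriv_mul (A := fun y => (Θ y)ᵀ) (fun i j => hΘx j i) hΘx,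
      matrixDirDeriv_transpose, ← hDΘx]
    exact transpose_mul_self_lmi_eq_add_transpose _ _ _ _
  simp_rw [mu2_nonpos_iff, hSG, dotProduct_add_transpose_mulVec]
  exact forall_congr' fun v => ⟨fun h => by linarith, fun h => by linarith⟩

/-- For fixed x, the contraction LMI matrix S(x) is negative semidefinite iff μ₂(G(x)) ≤ 0. -/
theorem negSemidef_S_iff_mu2_G_nonpos {n : ℕ}
    (Θ : (Fin n → ℝ) → Matrix (Fin n) (Fin n) ℝ)
    (f : (Fin n → ℝ) → (Fin n → ℝ)) (c : ℝ)
    (hΘ : ∀ i j, ContDiff ℝ 1 (fun x => Θ x i j))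
    (hf : ∀ i, ContDiff ℝ 1 (fun x => f x i))
    (Df : (Fin n → ℝ) → Matrix (Fin n) (Fin n) ℝ)
    (hDf : ∀ x i j, Df x i j = fderiv ℝ (fun y => f y i) x (Pi.single j 1))
    (DΘ : (Fin n → ℝ) → Matrix (Fin n) (Fin n) ℝ)
    (hDΘ : ∀ x i j, DΘ x i j = fderiv ℝ (fun y => Θ y i j) x (f x))
    (M : (Fin n → ℝ) → Matrix (Fin n) (Fin n) ℝ)
    (hM : ∀ x, M x = (Θ x)ᵀ * Θ x)
    (DM : (Fin n → ℝ) → Matrix (Fin n) (Fin n) ℝ)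
    (hDM : ∀ x i j, DM x i j = fderiv ℝ (fun y => M y i j) x (f x))
    (G : (Fin n → ℝ) → Matrix (Fin n) (Fin n) ℝ)
    (hG : ∀ x, G x = (Θ x)ᵀ * (DΘ x + Θ x * (Df x + c • (1 : Matrix (Fin n) (Fin n) ℝ))))
    (S : (Fin n → ℝ) → Matrix (Fin n) (Fin n) ℝ)
    (hS : ∀ x, S x = M x * Df x + (Df x)ᵀ * M x + DM x + (2 * c) • M x)
    (x : Fin n → ℝ) :
    (∀ v : Fin n → ℝ, v ⬝ᵥ (S x).mulVec v ≤ 0) ↔ mu2 (G x) ≤ 0 :=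
  negSemidef_S_iff_mu2_G_nonpos_general Θ f c hΘ Df DΘ hDΘ M hM DM hDM G hG S hS x
end

section
/- Let [A] = {A ∈ ℝ^{n×n} : A̲ ≤ A ≤ Ā entrywise} be an interval matrix with center A^c = (A̲+Ā)/2 and radius A^Δ = (Ā−A̲)/2. Then max_{A ∈ [A]} μ₂(A) = max { μ₂(A^c + diag(s) A^Δ diag(s)) : s ∈ {−1,+1}ⁿ }. -/
/-!
For a unit vector `v` maximizing `vᵀAv`, the deviation `A - A^c` is bounded entrywise by `A^Δ`, so
`vᵀAv ≤ vᵀA^c v + |v|ᵀA^Δ|v|`. With `s` the sign pattern of `v` one has `|v| = diag(s) v`, so the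
right-hand side is `vᵀ(A^c + diag(s) A^Δ diag(s))v`, which is at most `μ₂` of that corner matrix.
Since the corner matrices themselves lie in the interval matrix, the maximum over the interval
is the (finite) maximum over the corners.
-/

open Matrix

lemma dotProduct_mulVec_symPart {ι : Type*} [Fintype ι] (A : Matrix ι ι ℝ) (v : ι → ℝ) :
    v ⬝ᵥ ((1/2 : ℝ) • (A + Aᵀ)) *ᵥ v = v ⬝ᵥ A *ᵥ v := by
  rw [smul_mulVec, add_mulVec, dotProduct_smul, dotProduct_add, mulVec_transpose,
    dotProduct_comm v (vecMul v A), ← dotProduct_mulVec, smul_eq_mul]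
  ring

open scoped MatrixOrder Matrix.Norms.L2Operator in
lemma dotProduct_mulVec_le_mu2_mul {n : ℕ} (A : Matrix (Fin n) (Fin n) ℝ) (v : Fin n → ℝ) :
    v ⬝ᵥ A *ᵥ v ≤ mu2 A * (v ⬝ᵥ v) := by
  have hS := symPart_isHermitian A
  -- Loewner order: `μ₂ A • 1 - (A + Aᵀ)/2` is positive semidefinite.
  have hle : (1/2 : ℝ) • (A + Aᵀ) ≤ algebraMap ℝ _ (mu2 A) := by
    refine le_algebraMap_of_spectrum_le (fun x hx => ?_) hS
    obtain ⟨i, rfl⟩ := hS.spectrum_real_eq_range_eigenvalues ▸ hx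
    exact le_ciSup (Set.finite_range _).bddAbove i
  have hpsd := (le_iff.mp hle).dotProduct_mulVec_nonneg v
  rw [Algebra.algebraMap_eq_smul_one, sub_mulVec, smul_mulVec, one_mulVec, star_trivial,
    dotProduct_sub, dotProduct_smul, dotProduct_mulVec_symPart, smul_eq_mul] at hpsd
  linarith

lemma exists_dotProduct_mulVec_eq_mu2 {n : ℕ} [Nonempty (Fin n)]
    (A : Matrix (Fin n) (Fin n) ℝ) : ∃ v : Fin n → ℝ, v ⬝ᵥ v = 1 ∧ v ⬝ᵥ A *ᵥ v = mu2 A := by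
  have hS := symPart_isHermitian A
  obtain ⟨i, hi⟩ := Finite.exists_max hS.eigenvalues
  have hmu2 : mu2 A = hS.eigenvalues i :=
    le_antisymm (ciSup_le hi) (le_ciSup (Set.finite_range _).bddAbove i)
  have hunit : ⇑(hS.eigenvectorBasis i) ⬝ᵥ ⇑(hS.eigenvectorBasis i) = 1 := by
    have := real_inner_self_eq_norm_sq (hS.eigenvectorBasis i)
    rw [hS.eigenvectorBasis.orthonormal.1 i, EuclideanSpace.inner_eq_star_dotProduct] at this
    simpa using this
  refine ⟨_, hunit, ?_⟩
  rw [← dotProduct_mulVec_symPart, hS.mulVec_eigenvectorBasis, dotProduct_smul, hunit,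
    smul_eq_mul, mul_one, hmu2]

lemma add_diagonal_mul_mul_diagonal_apply {ι : Type*} [Fintype ι] [DecidableEq ι]
    (B C : Matrix ι ι ℝ) (s : ι → ℝ) (i j : ι) :
    (B + diagonal s * C * diagonal s) i j = B i j + s i * C i j * s j := by
  simp only [Matrix.add_apply, mul_diagonal, diagonal_mul]

lemma exists_sign_mul_eq_abs {ι : Type*} (v : ι → ℝ) :
    ∃ s : ι → ℝ, (∀ i, s i = 1 ∨ s i = -1) ∧ ∀ i, s i * v i = |v i| := by
  refine ⟨fun i => if 0 ≤ v i then 1 else -1, fun i => by dsimp only; split_ifs <;> simp,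
    fun i => ?_⟩
  dsimp only
  split_ifs with h
  · rw [one_mul, abs_of_nonneg h]
  · rw [neg_one_mul, abs_of_neg (not_le.mp h)]

lemma dotProduct_mulVec_le_of_abs_sub_le {ι : Type*} [Fintype ι] [DecidableEq ι]
    {A Ac AΔ : Matrix ι ι ℝ} (hA : ∀ i j, |A i j - Ac i j| ≤ AΔ i j) {s v : ι → ℝ}
    (hs : ∀ i, s i * v i = |v i|) :
    v ⬝ᵥ A *ᵥ v ≤ v ⬝ᵥ (Ac + diagonal s * AΔ * diagonal s) *ᵥ v := by
  simp only [dotProduct, mulVec, Finset.mul_sum]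
  refine Finset.sum_le_sum fun i _ => Finset.sum_le_sum fun j _ => ?_
  rw [add_diagonal_mul_mul_diagonal_apply]
  have hdev : (A i j - Ac i j) * (v i * v j) ≤ AΔ i j * (|v i| * |v j|) :=
    calc (A i j - Ac i j) * (v i * v j) ≤ |A i j - Ac i j| * (|v i| * |v j|) := by
          rw [← abs_mul, ← abs_mul]; exact le_abs_self _
      _ ≤ AΔ i j * (|v i| * |v j|) := by gcongr; exact hA i j
  rw [← hs i, ← hs j] at hdev
  linarith

lemma exists_sign_mu2_le_corner {n : ℕ} {A Ac AΔ : Matrix (Fin n) (Fin n) ℝ}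
    (hA : ∀ i j, |A i j - Ac i j| ≤ AΔ i j) :
    ∃ s : Fin n → ℝ, (∀ i, s i = 1 ∨ s i = -1) ∧
      mu2 A ≤ mu2 (Ac + diagonal s * AΔ * diagonal s) := by
  cases isEmpty_or_nonempty (Fin n)
  · exact ⟨1, fun _ => Or.inl rfl, le_of_eq (congrArg mu2 (ext fun i => isEmptyElim i))⟩
  obtain ⟨v, hv, hvA⟩ := exists_dotProduct_mulVec_eq_mu2 A
  obtain ⟨s, hs, hsv⟩ := exists_sign_mul_eq_abs v
  refine ⟨s, hs, ?_⟩
  calc mu2 A = v ⬝ᵥ A *ᵥ v := hvA.symm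
    _ ≤ v ⬝ᵥ (Ac + diagonal s * AΔ * diagonal s) *ᵥ v :=
        dotProduct_mulVec_le_of_abs_sub_le hA hsv
    _ ≤ mu2 (Ac + diagonal s * AΔ * diagonal s) * (v ⬝ᵥ v) := dotProduct_mulVec_le_mu2_mul _ _
    _ = mu2 (Ac + diagonal s * AΔ * diagonal s) := by rw [hv, mul_one]

lemma finite_setOf_sign {ι : Type*} [Finite ι] :
    {s : ι → ℝ | ∀ i, s i = 1 ∨ s i = -1}.Finite :=
  Set.Finite.pi' fun _ => Set.toFinite {1, -1}

lemma abs_sub_center_le_radius {ι : Type*} {A Alo Ahi : Matrix ι ι ℝ}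
    (hA : ∀ i j, Alo i j ≤ A i j ∧ A i j ≤ Ahi i j) (i j : ι) :
    |A i j - ((1/2 : ℝ) • (Alo + Ahi)) i j| ≤ ((1/2 : ℝ) • (Ahi - Alo)) i j := by
  simp only [Matrix.smul_apply, Matrix.add_apply, Matrix.sub_apply, smul_eq_mul, abs_le]
  constructor <;> linarith [hA i j]

lemma center_add_signed_radius_mem_box {ι : Type*} [Fintype ι] [DecidableEq ι]
    {Alo Ahi : Matrix ι ι ℝ} (h : ∀ i j, Alo i j ≤ Ahi i j) {s : ι → ℝ}
    (hs : ∀ i, s i = 1 ∨ s i = -1) (i j : ι) :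
    Alo i j ≤ ((1/2 : ℝ) • (Alo + Ahi) + diagonal s * ((1/2 : ℝ) • (Ahi - Alo)) * diagonal s) i j ∧
      ((1/2 : ℝ) • (Alo + Ahi) + diagonal s * ((1/2 : ℝ) • (Ahi - Alo)) * diagonal s) i j
        ≤ Ahi i j := by
  rw [add_diagonal_mul_mul_diagonal_apply]
  simp only [Matrix.smul_apply, Matrix.add_apply, Matrix.sub_apply, smul_eq_mul]
  rcases hs i with hi | hi <;> rcases hs j with hj | hj <;> rw [hi, hj] <;>
    constructor <;> linarith [h i j]

/-- Rohn's corner-check theorem for the ℓ₂-logarithmic norm over an interval matrix: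
the maximum of μ₂ over the interval matrix [A̲, Ā] is attained and equals the maximum of
μ₂ over the 2ⁿ sign-symmetric corner matrices A^c + diag(s) A^Δ diag(s). -/
theorem max_mu2_interval_eq_corner_max {n : ℕ}
    (Alo Ahi : Matrix (Fin n) (Fin n) ℝ) (h : ∀ i j, Alo i j ≤ Ahi i j)
    (Ac AΔ : Matrix (Fin n) (Fin n) ℝ)
    (hAc : Ac = (1/2 : ℝ) • (Alo + Ahi)) (hAΔ : AΔ = (1/2 : ℝ) • (Ahi - Alo)) :
    IsGreatest {r : ℝ | ∃ A : Matrix (Fin n) (Fin n) ℝ,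
        (∀ i j, Alo i j ≤ A i j ∧ A i j ≤ Ahi i j) ∧ r = mu2 A}
      (sSup {r : ℝ | ∃ s : Fin n → ℝ, (∀ i, s i = 1 ∨ s i = -1) ∧
        r = mu2 (Ac + Matrix.diagonal s * AΔ * Matrix.diagonal s)}) := by
  set corners := {r : ℝ | ∃ s : Fin n → ℝ, (∀ i, s i = 1 ∨ s i = -1) ∧
    r = mu2 (Ac + Matrix.diagonal s * AΔ * Matrix.diagonal s)}
  have hfin : corners.Finite :=
    (finite_setOf_sign.image fun s => mu2 (Ac + diagonal s * AΔ * diagonal s)).subset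
      fun _ ⟨s, hs, hr⟩ => ⟨s, hs, hr.symm⟩
  have hne : corners.Nonempty := ⟨_, 1, fun _ => Or.inl rfl, rfl⟩
  subst hAc hAΔ
  constructor
  · obtain ⟨s, hs, hmax⟩ := hne.csSup_mem hfin
    exact ⟨_, center_add_signed_radius_mem_box h hs, hmax⟩
  · rintro _ ⟨A, hA, rfl⟩
    obtain ⟨s, hs, hle⟩ := exists_sign_mu2_le_corner (abs_sub_center_le_radius hA)
    exact hle.trans (le_csSup hfin.bddAbove ⟨s, hs, rfl⟩)
end
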